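/- arXiv:1903.08966 — 9 statements merged into one kernel-verified Lean document; each statement's English description precedes it below -/
import Mathlib

section
/- Let A ⊆ ℝⁿ be a nonempty finite set, β ∈ ℝⁿ, c : A → ℝ with c_α ≥ 0 for all α, and d ∈ ℝ. Suppose there exists λ : A → ℝ with λ_α ≥ 0, ∑_α λ_α = 1, ∑_α λ_α • α = β, and ∏_{α : λ_α ≠ 0} (c_α / λ_α)^{λ_α} ≥ -d. Then for all x ∈ ℝⁿ with all coordinates positive, ∑_α c_α ∏_j x_j^{α_j} + d ∏_j x_j^{β_j} ≥ 0. -/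
open Finset Real

theorem stmt_0 (n : ℕ) (A : Finset (Fin n → ℝ)) (hA : A.Nonempty)
    (β : Fin n → ℝ) (c : (Fin n → ℝ) → ℝ) (hc : ∀ α ∈ A, 0 ≤ c α) (d : ℝ)
    (lam : (Fin n → ℝ) → ℝ) (hlam0 : ∀ α ∈ A, 0 ≤ lam α)
    (hlam1 : ∑ α ∈ A, lam α = 1)
    (hlamβ : ∑ α ∈ A, lam α • α = β)
    (hwit : -d ≤ ∏ α ∈ A.filter (fun α => lam α ≠ 0), (c α / lam α) ^ (lam α)) :
    ∀ x : Fin n → ℝ, (∀ j, 0 < x j) →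
      0 ≤ ∑ α ∈ A, c α * ∏ j, (x j) ^ (α j) + d * ∏ j, (x j) ^ (β j) := by
  intro x hx
  set S := A.filter (fun α => lam α ≠ 0) with hS
  set X : (Fin n → ℝ) → ℝ := fun α => ∏ j, (x j) ^ (α j) with hX
  have hXpos : ∀ α, 0 < X α := fun α => prod_pos fun j _ => rpow_pos_of_pos (hx j) _
  have hSsub : S ⊆ A := filter_subset _ _
  -- sum of lam over S is 1
  have hlamS : ∑ α ∈ S, lam α = 1 := by
    rw [← hlam1]
    exact Finset.sum_filter_ne_zero A
  -- key: ∏_{α ∈ S} (X α) ^ lam α = X β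
  have hXβ : ∏ α ∈ S, (X α) ^ (lam α) = X β := by
    have h1 : ∀ α ∈ A, (X α) ^ (lam α) = ∏ j, (x j) ^ (lam α * α j) := by
      intro α _
      rw [hX]
      rw [← Real.finset_prod_rpow _ _ (fun j _ => (rpow_pos_of_pos (hx j) _).le)]
      exact Finset.prod_congr rfl fun j _ => by
        rw [← Real.rpow_mul (hx j).le, mul_comm]
    have h2 : ∏ α ∈ S, (X α) ^ (lam α) = ∏ α ∈ A, (X α) ^ (lam α) := by
      rw [hS]
      apply Finset.prod_filter_of_ne
      intro α hα h hlz
      exact h (by rw [hlz, Real.rpow_zero])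
    rw [h2]
    calc ∏ α ∈ A, (X α) ^ (lam α) = ∏ α ∈ A, ∏ j, (x j) ^ (lam α * α j) :=
          Finset.prod_congr rfl h1
      _ = ∏ j, ∏ α ∈ A, (x j) ^ (lam α * α j) := Finset.prod_comm
      _ = ∏ j, (x j) ^ (∑ α ∈ A, lam α * α j) := by
          refine Finset.prod_congr rfl fun j _ => ?_
          exact (Real.rpow_sum_of_pos (hx j) _ _).symm
      _ = X β := by
          refine Finset.prod_congr rfl fun j _ => ?_
          congr 1
          have := congrFun hlamβ j
          simpa using this
  -- AM-GM
  have hAMGM := Real.geom_mean_le_arith_mean_weighted S lam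
      (fun α => (c α / lam α) * X α)
      (fun α hα => hlam0 α (hSsub hα)) hlamS
      (fun α hα => mul_nonneg (div_nonneg (hc α (hSsub hα)) (hlam0 α (hSsub hα)))
        (hXpos α).le)
  have hprodsplit : ∏ α ∈ S, ((c α / lam α) * X α) ^ (lam α)
      = (∏ α ∈ S, (c α / lam α) ^ (lam α)) * X β := by
    rw [← hXβ, ← Finset.prod_mul_distrib]
    refine Finset.prod_congr rfl fun α hα => ?_
    exact Real.mul_rpow (div_nonneg (hc α (hSsub hα)) (hlam0 α (hSsub hα))) (hXpos α).le
  have hsum : ∑ α ∈ S, lam α * ((c α / lam α) * X α) = ∑ α ∈ S, c α * X α := by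
    refine Finset.sum_congr rfl fun α hα => ?_
    have hne : lam α ≠ 0 := (mem_filter.mp hα).2
    field_simp
  have hsumle : ∑ α ∈ S, c α * X α ≤ ∑ α ∈ A, c α * X α := by
    apply Finset.sum_le_sum_of_subset_of_nonneg hSsub
    intro α hα _
    exact mul_nonneg (hc α hα) (hXpos α).le
  have hkey : (-d) * X β ≤ ∑ α ∈ A, c α * X α := by
    calc (-d) * X β ≤ (∏ α ∈ S, (c α / lam α) ^ (lam α)) * X β :=
          mul_le_mul_of_nonneg_right hwit (hXpos β).le
      _ = ∏ α ∈ S, ((c α / lam α) * X α) ^ (lam α) := hprodsplit.symm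
      _ ≤ ∑ α ∈ S, lam α * ((c α / lam α) * X α) := hAMGM
      _ = ∑ α ∈ S, c α * X α := hsum
      _ ≤ ∑ α ∈ A, c α * X α := hsumle
  nlinarith [hkey]
end

section
/- Let c₁ > 0 and c₂ ∈ ℝ. There exists ν ≥ 0 with ν · ln(ν/(e·c₁)) ≤ −|c₂| (with convention 0·ln(0/y)=0) if and only if |c₂| ≤ c₁. -/
theorem stmt_3 (c₁ c₂ : ℝ) (h : 0 < c₁) :
    (∃ ν : ℝ, 0 ≤ ν ∧ ν * Real.log (ν / (Real.exp 1 * c₁)) ≤ -|c₂|) ↔ |c₂| ≤ c₁ := by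
  constructor
  · rintro ⟨ν, hν, hle⟩
    rcases eq_or_lt_of_le hν with rfl | hν
    · simp at hle
      simp [hle]
      linarith
    · -- key: ν * log (ν / (e * c₁)) ≥ -c₁
      have hlog : Real.log (c₁ / ν) ≤ c₁ / ν - 1 :=
        Real.log_le_sub_one_of_pos (by positivity)
      have hne : Real.log (ν / (Real.exp 1 * c₁)) = -Real.log (c₁ / ν) - 1 := by
        rw [Real.log_div (ne_of_gt hν) (by positivity),
          Real.log_mul (Real.exp_ne_zero 1) (ne_of_gt h), Real.log_exp,
          Real.log_div (ne_of_gt h) (ne_of_gt hν)]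
        ring
      have key : -c₁ ≤ ν * Real.log (ν / (Real.exp 1 * c₁)) := by
        rw [hne]
        have : ν * (-(c₁ / ν - 1) - 1) = -c₁ := by field_simp; ring
        nlinarith
      linarith
  · intro hc
    refine ⟨c₁, le_of_lt h, ?_⟩
    have : c₁ / (Real.exp 1 * c₁) = (Real.exp 1)⁻¹ := by field_simp
    rw [this, Real.log_inv, Real.log_exp]
    nlinarith
end

section
/- Let A ⊆ ℝⁿ be a nonempty finite set and β ∈ conv(A). Then every λ ∈ Λ(A,β) can be written as a finite convex combination λ = ∑_{j=1}^k μ_j λ^{(j)} with μ_j ≥ 0, ∑ μ_j = 1, each λ^{(j)} ∈ Λ(A,β), and the support of each λ^{(j)} affinely independent. -/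
open Finset

private def MemL (n : ℕ) (A : Finset (Fin n → ℝ)) (β : Fin n → ℝ)
    (l : (Fin n → ℝ) → ℝ) : Prop :=
  (∀ α, 0 ≤ l α) ∧ (∀ α ∉ A, l α = 0) ∧
    (∑ α ∈ A, l α = 1) ∧ ∑ α ∈ A, l α • α = β

private def DecompL (n : ℕ) (A : Finset (Fin n → ℝ)) (β : Fin n → ℝ)
    (l : (Fin n → ℝ) → ℝ) : Prop :=
  ∃ (k : ℕ) (μ : Fin k → ℝ) (lj : Fin k → ((Fin n → ℝ) → ℝ)),
    1 ≤ k ∧ (∀ j, 0 ≤ μ j) ∧ (∑ j, μ j = 1) ∧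
    (∀ j, MemL n A β (lj j)) ∧
    (∀ j, AffineIndependent ℝ
      (fun a : {α : Fin n → ℝ // 0 < lj j α} => (a : Fin n → ℝ))) ∧
    l = ∑ j, μ j • lj j

private lemma decomp_combine {n : ℕ} {A : Finset (Fin n → ℝ)} {β : Fin n → ℝ}
    {l l1 l2 : (Fin n → ℝ) → ℝ} {c : ℝ} (hc0 : 0 ≤ c) (hc1 : c ≤ 1)
    (h1 : DecompL n A β l1) (h2 : DecompL n A β l2)
    (hl : l = c • l1 + (1 - c) • l2) : DecompL n A β l := by
  obtain ⟨k1, μ1, lj1, hk1, hμ1, hs1, hm1, hai1, he1⟩ := h1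
  obtain ⟨k2, μ2, lj2, hk2, hμ2, hs2, hm2, hai2, he2⟩ := h2
  set μ' : Fin (k1 + k2) → ℝ :=
    Fin.addCases (fun j => c * μ1 j) (fun j => (1 - c) * μ2 j) with hμ'
  set L : Fin (k1 + k2) → ((Fin n → ℝ) → ℝ) :=
    Fin.addCases (motive := fun _ => (Fin n → ℝ) → ℝ) lj1 lj2 with hL
  have hLl : ∀ i, L (Fin.castAdd k2 i) = lj1 i := fun i => Fin.addCases_left i
  have hLr : ∀ i, L (Fin.natAdd k1 i) = lj2 i := fun i => Fin.addCases_right i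
  have hμl : ∀ i, μ' (Fin.castAdd k2 i) = c * μ1 i := fun i => Fin.addCases_left i
  have hμr : ∀ i, μ' (Fin.natAdd k1 i) = (1 - c) * μ2 i := fun i => Fin.addCases_right i
  refine ⟨k1 + k2, μ', L, by omega, ?_, ?_, ?_, ?_, ?_⟩
  · intro j
    induction j using Fin.addCases with
    | left i => rw [hμl]; exact mul_nonneg hc0 (hμ1 i)
    | right i => rw [hμr]; exact mul_nonneg (by linarith) (hμ2 i)
  · rw [Fin.sum_univ_add]
    simp only [hμ', Fin.addCases_left, Fin.addCases_right]
    rw [← Finset.mul_sum, ← Finset.mul_sum, hs1, hs2]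
    ring
  · intro j
    induction j using Fin.addCases with
    | left i => rw [hLl]; exact hm1 i
    | right i => rw [hLr]; exact hm2 i
  · intro j
    induction j using Fin.addCases with
    | left i => rw [hLl]; exact hai1 i
    | right i => rw [hLr]; exact hai2 i
  · rw [hl, Fin.sum_univ_add]
    simp only [hμ', hL, Fin.addCases_left, Fin.addCases_right, mul_smul]
    rw [← Finset.smul_sum, ← Finset.smul_sum, ← he1, ← he2]

private lemma decomp_of_mem (n : ℕ) (A : Finset (Fin n → ℝ)) (β : Fin n → ℝ) :
    ∀ s : ℕ, ∀ l, MemL n A β l →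
      (A.filter (fun α => 0 < l α)).card ≤ s → DecompL n A β l := by
  intro s
  induction s with
  | zero =>
    intro l hMem hcard
    exfalso
    have hfe : A.filter (fun α => 0 < l α) = ∅ := Finset.card_eq_zero.1 (Nat.le_zero.1 hcard)
    have : ∑ α ∈ A, l α = 0 := by
      refine Finset.sum_eq_zero fun α hα => ?_
      by_contra h
      have h0 : 0 < l α := lt_of_le_of_ne (hMem.1 α) (Ne.symm h)
      have : α ∈ A.filter (fun α => 0 < l α) := Finset.mem_filter.2 ⟨hα, h0⟩
      simp [hfe] at this
    rw [hMem.2.2.1] at this; norm_num at this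
  | succ s ih =>
    intro l hMem hcard
    obtain ⟨hl0, hlA, hl1, hlβ⟩ := hMem
    by_cases hindep : AffineIndependent ℝ
        (fun a : {α : Fin n → ℝ // 0 < l α} => (a : Fin n → ℝ))
    · exact ⟨1, fun _ => 1, fun _ => l, le_refl 1, fun _ => zero_le_one,
        by simp, fun _ => ⟨hl0, hlA, hl1, hlβ⟩, fun _ => hindep, by simp⟩
    · rw [affineIndependent_iff] at hindep
      push_neg at hindep
      obtain ⟨t, w, hw0, hwv, e₀, he₀t, hwe₀⟩ := hindep
      set W : (Fin n → ℝ) → ℝ :=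
        fun α => ∑ e ∈ t, if (e : Fin n → ℝ) = α then w e else 0 with hWdef
      -- W vanishes where l does not have positive value
      have hWl : ∀ α, W α ≠ 0 → 0 < l α := by
        intro α hW
        by_contra h
        apply hW
        refine Finset.sum_eq_zero fun e _ => ?_
        have : (e : Fin n → ℝ) ≠ α := fun he => h (he ▸ e.property)
        simp [this]
      have hmemA : ∀ α, 0 < l α → α ∈ A := by
        intro α h
        by_contra hα
        rw [hlA α hα] at h; exact lt_irrefl 0 h
      have hWA : ∀ α, W α ≠ 0 → α ∈ A := fun α h => hmemA α (hWl α h)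
      have hWsum : ∑ α ∈ A, W α = 0 := by
        have h2 : ∑ α ∈ A, W α = ∑ e ∈ t, w e := by
          simp only [hWdef]
          rw [Finset.sum_comm]
          refine Finset.sum_congr rfl fun e _ => ?_
          rw [Finset.sum_ite_eq]
          simp [hmemA _ e.property]
        rw [h2, hw0]
      have hWvec : ∑ α ∈ A, W α • α = 0 := by
        have : ∀ α ∈ A, W α • α = ∑ e ∈ t, (if (e : Fin n → ℝ) = α then w e • α else 0) := by
          intro α _
          rw [hWdef, Finset.sum_smul]
          refine Finset.sum_congr rfl fun e _ => ?_
          split <;> simp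
        have h2 : ∑ α ∈ A, ∑ e ∈ t, (if (e : Fin n → ℝ) = α then w e • α else 0)
            = ∑ e ∈ t, w e • (e : Fin n → ℝ) := by
          rw [Finset.sum_comm]
          refine Finset.sum_congr rfl fun e _ => ?_
          rw [Finset.sum_ite_eq]
          simp [hmemA _ e.property]
        rw [Finset.sum_congr rfl this, h2, hwv]
      have hWe₀ : W (e₀ : Fin n → ℝ) = w e₀ := by
        rw [hWdef]
        simp only [Subtype.val_inj]
        rw [Finset.sum_ite_eq']
        simp [he₀t]
      have hα₀A : (e₀ : Fin n → ℝ) ∈ A := hmemA _ e₀.property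
      have hWne0 : W (e₀ : Fin n → ℝ) ≠ 0 := by rw [hWe₀]; exact hwe₀
      set P := A.filter (fun α => 0 < W α) with hPdef
      set N := A.filter (fun α => W α < 0) with hNdef
      have hP : P.Nonempty := by
        by_contra h
        have h1 : ∀ α ∈ A, W α ≤ 0 := by
          intro α hα
          by_contra hlt
          exact h ⟨α, Finset.mem_filter.2 ⟨hα, not_le.1 hlt⟩⟩
        exact hWne0 ((Finset.sum_eq_zero_iff_of_nonpos h1).1 hWsum _ hα₀A)
      have hN : N.Nonempty := by
        by_contra h
        have h1 : ∀ α ∈ A, 0 ≤ W α := by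
          intro α hα
          by_contra hlt
          exact h ⟨α, Finset.mem_filter.2 ⟨hα, not_le.1 hlt⟩⟩
        exact hWne0 ((Finset.sum_eq_zero_iff_of_nonneg h1).1 hWsum _ hα₀A)
      set tp := P.inf' hP (fun α => l α / W α) with htp
      set tm := N.inf' hN (fun α => l α / (-W α)) with htm
      have htp_pos : 0 < tp := by
        rw [htp, Finset.lt_inf'_iff]
        intro α hα
        have hWα : 0 < W α := (Finset.mem_filter.1 hα).2
        exact div_pos (hWl α (ne_of_gt hWα)) hWα
      have htm_pos : 0 < tm := by
        rw [htm, Finset.lt_inf'_iff]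
        intro α hα
        have hWα : W α < 0 := (Finset.mem_filter.1 hα).2
        exact div_pos (hWl α (ne_of_lt hWα)) (by linarith)
      have htpW : ∀ α, 0 < W α → tp * W α ≤ l α := by
        intro α hWα
        have hαP : α ∈ P := Finset.mem_filter.2 ⟨hWA α (ne_of_gt hWα), hWα⟩
        have := Finset.inf'_le (fun α => l α / W α) hαP
        rw [← htp] at this
        calc tp * W α ≤ (l α / W α) * W α := by
              exact mul_le_mul_of_nonneg_right this (le_of_lt hWα)
          _ = l α := div_mul_cancel₀ _ (ne_of_gt hWα)
      have htmW : ∀ α, W α < 0 → tm * (-W α) ≤ l α := by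
        intro α hWα
        have hαN : α ∈ N := Finset.mem_filter.2 ⟨hWA α (ne_of_lt hWα), hWα⟩
        have := Finset.inf'_le (fun α => l α / (-W α)) hαN
        rw [← htm] at this
        calc tm * (-W α) ≤ (l α / (-W α)) * (-W α) := by
              exact mul_le_mul_of_nonneg_right this (by linarith)
          _ = l α := div_mul_cancel₀ _ (by linarith)
      set l1 : (Fin n → ℝ) → ℝ := fun α => l α - tp * W α with hl1def
      set l2 : (Fin n → ℝ) → ℝ := fun α => l α + tm * W α with hl2def
      have hl1nn : ∀ α, 0 ≤ l1 α := by
        intro α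
        rcases le_or_gt (W α) 0 with h | h
        · have : tp * W α ≤ 0 := mul_nonpos_of_nonneg_of_nonpos (le_of_lt htp_pos) h
          have := hl0 α
          simp only [hl1def]; linarith
        · have := htpW α h
          simp only [hl1def]; linarith
      have hl2nn : ∀ α, 0 ≤ l2 α := by
        intro α
        rcases lt_or_ge (W α) 0 with h | h
        · have := htmW α h
          simp only [hl2def]; linarith
        · have : 0 ≤ tm * W α := mul_nonneg (le_of_lt htm_pos) h
          have := hl0 α
          simp only [hl2def]; linarith
      have hW0out : ∀ α ∉ A, W α = 0 := by
        intro α hα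
        by_contra h
        exact hα (hWA α h)
      have hMem1 : MemL n A β l1 := by
        refine ⟨hl1nn, ?_, ?_, ?_⟩
        · intro α hα; simp only [hl1def]; rw [hlA α hα, hW0out α hα]; ring
        · simp only [hl1def]
          rw [Finset.sum_sub_distrib, hl1, ← Finset.mul_sum, hWsum]; ring
        · simp only [hl1def]
          have : ∀ α ∈ A, (l α - tp * W α) • α = l α • α - tp • (W α • α) := by
            intro α _; rw [sub_smul, mul_smul]
          rw [Finset.sum_congr rfl this, Finset.sum_sub_distrib, hlβ,
            ← Finset.smul_sum, hWvec, smul_zero, sub_zero]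
      have hMem2 : MemL n A β l2 := by
        refine ⟨hl2nn, ?_, ?_, ?_⟩
        · intro α hα; simp only [hl2def]; rw [hlA α hα, hW0out α hα]; ring
        · simp only [hl2def]
          rw [Finset.sum_add_distrib, hl1, ← Finset.mul_sum, hWsum]; ring
        · simp only [hl2def]
          have : ∀ α ∈ A, (l α + tm * W α) • α = l α • α + tm • (W α • α) := by
            intro α _; rw [add_smul, mul_smul]
          rw [Finset.sum_congr rfl this, Finset.sum_add_distrib, hlβ,
            ← Finset.smul_sum, hWvec, smul_zero, add_zero]
      -- support shrinks
      obtain ⟨αp, hαpP, hαp⟩ := Finset.exists_mem_eq_inf' hP (fun α => l α / W α)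
      obtain ⟨αm, hαmN, hαm⟩ := Finset.exists_mem_eq_inf' hN (fun α => l α / (-W α))
      have hWαp : 0 < W αp := (Finset.mem_filter.1 hαpP).2
      have hWαm : W αm < 0 := (Finset.mem_filter.1 hαmN).2
      have hl1αp : l1 αp = 0 := by
        simp only [hl1def]
        rw [← htp] at hαp
        rw [hαp, div_mul_cancel₀ _ (ne_of_gt hWαp)]; ring
      have hl2αm : l2 αm = 0 := by
        simp only [hl2def]
        rw [← htm] at hαm
        rw [hαm, div_neg, neg_mul, div_mul_cancel₀ _ (ne_of_lt hWαm)]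
        ring
      have hsub1 : A.filter (fun α => 0 < l1 α) ⊆ (A.filter (fun α => 0 < l α)).erase αp := by
        intro α hα
        obtain ⟨hαA, hα1⟩ := Finset.mem_filter.1 hα
        have hlpos : 0 < l α := by
          by_contra h
          have hl0' : l α = 0 := le_antisymm (not_lt.1 h) (hl0 α)
          have hW0 : W α = 0 := by
            by_contra hW
            exact h (hWl α hW)
          simp only [hl1def] at hα1
          rw [hl0', hW0] at hα1; simp at hα1
        refine Finset.mem_erase.2 ⟨?_, Finset.mem_filter.2 ⟨hαA, hlpos⟩⟩
        intro he
        rw [he, hl1αp] at hα1; exact lt_irrefl 0 hα1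
      have hsub2 : A.filter (fun α => 0 < l2 α) ⊆ (A.filter (fun α => 0 < l α)).erase αm := by
        intro α hα
        obtain ⟨hαA, hα2⟩ := Finset.mem_filter.1 hα
        have hlpos : 0 < l α := by
          by_contra h
          have hl0' : l α = 0 := le_antisymm (not_lt.1 h) (hl0 α)
          have hW0 : W α = 0 := by
            by_contra hW
            exact h (hWl α hW)
          simp only [hl2def] at hα2
          rw [hl0', hW0] at hα2; simp at hα2
        refine Finset.mem_erase.2 ⟨?_, Finset.mem_filter.2 ⟨hαA, hlpos⟩⟩
        intro he
        rw [he, hl2αm] at hα2; exact lt_irrefl 0 hα2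
      have hαpmem : αp ∈ A.filter (fun α => 0 < l α) :=
        Finset.mem_filter.2 ⟨(Finset.mem_filter.1 hαpP).1, hWl αp (ne_of_gt hWαp)⟩
      have hαmmem : αm ∈ A.filter (fun α => 0 < l α) :=
        Finset.mem_filter.2 ⟨(Finset.mem_filter.1 hαmN).1, hWl αm (ne_of_lt hWαm)⟩
      have hcard1 : (A.filter (fun α => 0 < l1 α)).card ≤ s := by
        have := Finset.card_le_card hsub1
        rw [Finset.card_erase_of_mem hαpmem] at this
        omega
      have hcard2 : (A.filter (fun α => 0 < l2 α)).card ≤ s := by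
        have := Finset.card_le_card hsub2
        rw [Finset.card_erase_of_mem hαmmem] at this
        omega
      set c := tm / (tp + tm) with hcdef
      have htptm : 0 < tp + tm := by linarith
      have hc0 : 0 ≤ c := div_nonneg (le_of_lt htm_pos) (le_of_lt htptm)
      have hc1 : c ≤ 1 := by
        rw [hcdef, div_le_one htptm]; linarith
      have hkey : c * tp = (1 - c) * tm := by
        rw [hcdef]; field_simp; ring
      have hconv : l = c • l1 + (1 - c) • l2 := by
        funext α
        simp only [Pi.add_apply, Pi.smul_apply, smul_eq_mul, hl1def, hl2def]
        have : c * (l α - tp * W α) + (1 - c) * (l α + tm * W α)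
            = l α + ((1 - c) * tm - c * tp) * W α := by ring
        rw [this, ← hkey]; ring
      exact decomp_combine hc0 hc1 (ih l1 hMem1 hcard1) (ih l2 hMem2 hcard2) hconv

theorem stmt_5 (n : ℕ) (A : Finset (Fin n → ℝ)) (hA : A.Nonempty)
    (β : Fin n → ℝ) (hβ : β ∈ convexHull ℝ (A : Set (Fin n → ℝ)))
    (Λ : Set ((Fin n → ℝ) → ℝ))
    (hΛ : Λ = {l | (∀ α, 0 ≤ l α) ∧ (∀ α ∉ A, l α = 0) ∧
      (∑ α ∈ A, l α = 1) ∧ ∑ α ∈ A, l α • α = β})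
    (l : (Fin n → ℝ) → ℝ) (hl : l ∈ Λ) :
    ∃ (k : ℕ) (μ : Fin k → ℝ) (lj : Fin k → ((Fin n → ℝ) → ℝ)),
      1 ≤ k ∧ (∀ j, 0 ≤ μ j) ∧ (∑ j, μ j = 1) ∧
      (∀ j, lj j ∈ Λ) ∧
      (∀ j, AffineIndependent ℝ
        (fun a : {α : Fin n → ℝ // 0 < lj j α} => (a : Fin n → ℝ))) ∧
      l = ∑ j, μ j • lj j := by
  subst hΛ
  have hMem : MemL n A β l := hl
  obtain ⟨k, μ, lj, hk, hμ, hs, hm, hai, he⟩ :=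
    decomp_of_mem n A β (A.filter (fun α => 0 < l α)).card l hMem le_rfl
  exact ⟨k, μ, lj, hk, hμ, hs, fun j => hm j, hai, he⟩
end

section
/- Let A ⊆ ℝⁿ nonempty finite, β ∈ conv(A), v ∈ ℝ_{>0}^A and w ∈ ℝ with w ≠ 0. Then the following are equivalent: (1) for all λ ∈ Λ(A,β), ln|w| ≤ ∑_α λ_α ln(v_α); (2) there exists τ ∈ ℝⁿ such that for all α ∈ A, ln(|w|/v_α) ≤ ⟨α − β, τ⟩. -/
open Finset

open scoped InnerProductSpace

/-- Conic Carathéodory: any nonnegative combination can be rewritten as a nonnegative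
combination supported on a linearly independent subfamily. -/
lemma cone_caratheodory {E : Type*} [AddCommGroup E] [Module ℝ E]
    {ι : Type*} [Fintype ι] [DecidableEq ι] (u : ι → E) :
    ∀ (N : ℕ) (μ : ι → ℝ), (univ.filter fun i => μ i ≠ 0).card ≤ N → (∀ i, 0 ≤ μ i) →
      ∃ s : Finset ι, LinearIndependent ℝ (fun i : s => u i) ∧
        ∃ μ' : ι → ℝ, (∀ i, 0 ≤ μ' i) ∧ (∀ i ∉ s, μ' i = 0) ∧
          ∑ i, μ' i • u i = ∑ i, μ i • u i := by
  intro N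
  induction N with
  | zero =>
    intro μ hcard hμ
    have hz : ∀ i, μ i = 0 := by
      intro i
      by_contra h
      have hi : i ∈ univ.filter fun i => μ i ≠ 0 := by simp [h]
      have := Finset.card_pos.2 ⟨i, hi⟩
      omega
    exact ⟨∅, linearIndependent_empty_type, μ, hμ, fun i _ => hz i, rfl⟩
  | succ N ih =>
    intro μ hcard hμ
    set t := univ.filter fun i => μ i ≠ 0 with ht
    by_cases hli : LinearIndependent ℝ (fun i : t => u i)
    · refine ⟨t, hli, μ, hμ, fun i hi => ?_, rfl⟩
      by_contra h
      exact hi (by simp [ht, h])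
    · obtain ⟨c, hc0, j, hcj⟩ := Fintype.not_linearIndependent_iff.1 hli
      set cext : ι → ℝ := fun i => if h : i ∈ t then c ⟨i, h⟩ else 0 with hcext
      have hcextt : ∀ i ∉ t, cext i = 0 := fun i hi => by simp [hcext, dif_neg hi]
      have hsumc : ∑ i, cext i • u i = 0 := by
        have h1 : ∑ i, cext i • u i = ∑ i ∈ t, cext i • u i :=
          (Finset.sum_subset (Finset.subset_univ t)
            (fun i _ hi => by rw [hcextt i hi, zero_smul])).symm
        rw [h1, ← Finset.sum_coe_sort t (fun i => cext i • u i), ← hc0]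
        exact Finset.sum_congr rfl fun i _ => by simp [hcext, i.2]
      have hcextj : cext (j : ι) = c j := by simp [hcext, j.2]
      obtain ⟨d, hd0, hdt, j₁, hj₁⟩ : ∃ d : ι → ℝ, (∑ i, d i • u i = 0) ∧
          (∀ i ∉ t, d i = 0) ∧ ∃ i, 0 < d i := by
        rcases lt_or_gt_of_ne hcj with h | h
        · refine ⟨fun i => -cext i, ?_, fun i hi => by dsimp only; rw [hcextt i hi, neg_zero],
            ⟨j, by dsimp only; rw [hcextj]; linarith⟩⟩
          simp only [neg_smul, Finset.sum_neg_distrib, hsumc, neg_zero]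
        · exact ⟨cext, hsumc, hcextt, ⟨j, by rw [hcextj]; exact h⟩⟩
      have hPne : (univ.filter fun i => 0 < d i).Nonempty := ⟨j₁, by simp [hj₁]⟩
      obtain ⟨i₀, hi₀P, hi₀min⟩ :=
        Finset.exists_min_image (univ.filter fun i => 0 < d i) (fun i => μ i / d i) hPne
      have hdi₀ : 0 < d i₀ := (Finset.mem_filter.1 hi₀P).2
      set r := μ i₀ / d i₀ with hr
      have hr0 : 0 ≤ r := div_nonneg (hμ i₀) hdi₀.le
      set μ'' : ι → ℝ := fun i => μ i - r * d i with hμ''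
      have hμ''0 : ∀ i, 0 ≤ μ'' i := by
        intro i
        rcases le_or_gt (d i) 0 with h | h
        · have : r * d i ≤ 0 := mul_nonpos_of_nonneg_of_nonpos hr0 h
          have := hμ i
          simp only [hμ'']
          linarith
        · have hiP : i ∈ univ.filter fun i => 0 < d i := by simp [h]
          have hmin := hi₀min i hiP
          have : r * d i ≤ μ i := by
            rw [← le_div_iff₀ h]; exact hmin
          simp only [hμ'']
          linarith
      have hsum'' : ∑ i, μ'' i • u i = ∑ i, μ i • u i := by
        simp only [hμ'', sub_smul, Finset.sum_sub_distrib, mul_smul, ← Finset.smul_sum, hd0,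
          smul_zero, sub_zero]
      have hi₀t : i₀ ∈ t := by
        by_contra h
        rw [hdt i₀ h] at hdi₀
        exact lt_irrefl 0 hdi₀
      have hsub : (univ.filter fun i => μ'' i ≠ 0) ⊆ t.erase i₀ := by
        intro i hi
        rw [Finset.mem_filter] at hi
        rw [Finset.mem_erase]
        constructor
        · rintro rfl
          apply hi.2
          simp only [hμ'', hr]
          field_simp
          ring
        · by_contra h
          apply hi.2
          simp only [hμ'']
          have h1 : μ i = 0 := by
            by_contra h'
            exact h (by simp [ht, h'])
          rw [h1, hdt i h, mul_zero, sub_zero]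
      have hcard'' : (univ.filter fun i => μ'' i ≠ 0).card ≤ N := by
        have h1 := Finset.card_le_card hsub
        have h2 : (t.erase i₀).card = t.card - 1 := Finset.card_erase_of_mem hi₀t
        have h3 : 0 < t.card := Finset.card_pos.2 ⟨i₀, hi₀t⟩
        omega
      obtain ⟨s, hsli, μ', h1, h2, h3⟩ := ih μ'' hcard'' hμ''0
      exact ⟨s, hsli, μ', h1, h2, by rw [h3, hsum'']⟩

/-- The cone generated by finitely many vectors in a finite-dimensional normed space is closed. -/
lemma isClosed_finite_cone {E : Type*} [NormedAddCommGroup E] [NormedSpace ℝ E]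
    [FiniteDimensional ℝ E] {ι : Type*} [Fintype ι] [DecidableEq ι] (u : ι → E) :
    IsClosed {x : E | ∃ μ : ι → ℝ, (∀ i, 0 ≤ μ i) ∧ ∑ i, μ i • u i = x} := by
  classical
  let F : ∀ s : Finset ι, (↥s → ℝ) →ₗ[ℝ] E := fun s =>
    { toFun := fun ν => ∑ i, ν i • u i.1
      map_add' := fun ν₁ ν₂ => by simp [add_smul, Finset.sum_add_distrib]
      map_smul' := fun a ν => by simp [Finset.smul_sum, smul_smul] }
  let D : Finset ι → Set E := fun s =>
    if LinearIndependent ℝ (fun i : s => u i) then (F s) '' {ν | ∀ i, 0 ≤ ν i} else ∅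
  have hset : {x : E | ∃ μ : ι → ℝ, (∀ i, 0 ≤ μ i) ∧ ∑ i, μ i • u i = x} = ⋃ s, D s := by
    ext x
    constructor
    · rintro ⟨μ, hμ, rfl⟩
      obtain ⟨s, hli, μ', hμ'0, hμ's, hsum⟩ := cone_caratheodory u _ μ le_rfl hμ
      refine Set.mem_iUnion.2 ⟨s, ?_⟩
      simp only [D, if_pos hli]
      refine ⟨fun i => μ' i.1, fun i => hμ'0 _, ?_⟩
      show ∑ i : s, μ' i.1 • u i.1 = ∑ i, μ i • u i
      rw [Finset.sum_coe_sort s (fun i => μ' i • u i),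
        Finset.sum_subset (Finset.subset_univ s)
          (fun i _ hi => by rw [hμ's i hi, zero_smul])]
      exact hsum
    · intro hx
      obtain ⟨s, hs⟩ := Set.mem_iUnion.1 hx
      by_cases hli : LinearIndependent ℝ (fun i : s => u i)
      · rw [show D s = (F s) '' {ν | ∀ i, 0 ≤ ν i} from if_pos hli] at hs
        obtain ⟨ν, hν, rfl⟩ := hs
        refine ⟨fun i => if h : i ∈ s then ν ⟨i, h⟩ else 0, fun i => ?_, ?_⟩
        · dsimp only
          by_cases h : i ∈ s
          · rw [dif_pos h]; exact hν _
          · rw [dif_neg h]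
        · show ∑ i, (if h : i ∈ s then ν ⟨i, h⟩ else 0) • u i = ∑ i : ↥s, ν i • u i.1
          rw [← Finset.sum_subset (Finset.subset_univ s)
            (fun i _ hi => by rw [dif_neg hi, zero_smul]),
            ← Finset.sum_coe_sort s (fun i => (if h : i ∈ s then ν ⟨i, h⟩ else 0) • u i)]
          exact Finset.sum_congr rfl fun i _ => by rw [dif_pos i.2, Subtype.coe_eta]
      · rw [show D s = ∅ from if_neg hli] at hs
        exact absurd hs (Set.notMem_empty _)
  rw [hset]
  refine isClosed_iUnion_of_finite fun s => ?_
  by_cases hli : LinearIndependent ℝ (fun i : s => u i)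
  · rw [show D s = (F s) '' {ν | ∀ i, 0 ≤ ν i} from if_pos hli]
    have hker : LinearMap.ker (F s) = ⊥ := by
      rw [LinearMap.ker_eq_bot']
      intro ν hν
      funext i
      exact Fintype.linearIndependent_iff.1 hli ν hν i
    have horth : IsClosed {ν : ↥s → ℝ | ∀ i, 0 ≤ ν i} := by
      have : {ν : ↥s → ℝ | ∀ i, 0 ≤ ν i} =
          ⋂ i, (fun ν : ↥s → ℝ => ν i) ⁻¹' Set.Ici 0 := by
        ext ν; simp [Set.mem_iInter]
      rw [this]
      exact isClosed_iInter fun i => isClosed_Ici.preimage (continuous_apply i)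
    exact ((F s).isClosedEmbedding_of_injective hker).isClosedMap _ horth
  · rw [show D s = ∅ from if_neg hli]
    exact isClosed_empty

/-- Farkas lemma via separation of a point from a closed finitely generated cone. -/
lemma farkas_cone {H : Type*} [NormedAddCommGroup H] [InnerProductSpace ℝ H]
    [FiniteDimensional ℝ H] {ι : Type*} [Fintype ι] [DecidableEq ι]
    (u : ι → H) (b : H)
    (hb : ∀ μ : ι → ℝ, (∀ i, 0 ≤ μ i) → ∑ i, μ i • u i ≠ b) :
    ∃ y : H, (∀ i, 0 ≤ ⟪u i, y⟫_ℝ) ∧ ⟪y, b⟫_ℝ < 0 := by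
  let K : ConvexCone ℝ H :=
    { carrier := {x : H | ∃ μ : ι → ℝ, (∀ i, 0 ≤ μ i) ∧ ∑ i, μ i • u i = x}
      smul_mem' := by
        rintro a ha x ⟨μ, hμ, rfl⟩
        exact ⟨fun i => a * μ i, fun i => mul_nonneg ha.le (hμ i),
          by simp [Finset.smul_sum, mul_smul]⟩
      add_mem' := by
        rintro x ⟨μ, hμ, rfl⟩ y ⟨ν, hν, rfl⟩
        exact ⟨fun i => μ i + ν i, fun i => add_nonneg (hμ i) (hν i),
          by simp [add_smul, Finset.sum_add_distrib]⟩ }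
  have hne : (K : Set H).Nonempty := ⟨0, 0, fun i => le_rfl, by simp⟩
  have hcl : IsClosed (K : Set H) := isClosed_finite_cone u
  have hbK : b ∉ K := by
    rintro ⟨μ, hμ, he⟩
    exact hb μ hμ he
  obtain ⟨y, hy1, hy2⟩ : ∃ y : H, (∀ x ∈ K, 0 ≤ ⟪x, y⟫_ℝ) ∧ ⟪y, b⟫_ℝ < 0 := by
    let P : ProperCone ℝ H :=
      ⟨K.toPointedCone (ConvexCone.Pointed.of_nonempty_of_isClosed hne hcl), hcl⟩
    obtain ⟨y, h1, h2⟩ := P.hyperplane_separation' (x₀ := b) (fun h => hbK h)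
    exact ⟨y, fun x hx => h1 x hx, by rwa [real_inner_comm]⟩
  refine ⟨y, fun i => hy1 _ ?_, hy2⟩
  refine ⟨fun i' => if i' = i then 1 else 0, fun i' => by dsimp; split <;> norm_num, ?_⟩
  simp [ite_smul]

theorem stmt_8 (n : ℕ) (A : Finset (Fin n → ℝ)) (hA : A.Nonempty)
    (β : Fin n → ℝ) (hβ : β ∈ convexHull ℝ (A : Set (Fin n → ℝ)))
    (v : (Fin n → ℝ) → ℝ) (hv : ∀ α ∈ A, 0 < v α) (w : ℝ) (hw : w ≠ 0) :
    ((∀ lam : (Fin n → ℝ) → ℝ, (∀ α ∈ A, 0 ≤ lam α) →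
        (∑ α ∈ A, lam α = 1) → (∑ α ∈ A, lam α • α = β) →
        Real.log |w| ≤ ∑ α ∈ A, lam α * Real.log (v α)) ↔
      (∃ τ : Fin n → ℝ, ∀ α ∈ A,
        Real.log (|w| / v α) ≤ ∑ i, (α i - β i) * τ i)) := by
  classical
  have hw' : (0:ℝ) < |w| := abs_pos.2 hw
  set c : (Fin n → ℝ) → ℝ := fun α => Real.log |w| - Real.log (v α) with hc
  have hcdiv : ∀ α ∈ A, Real.log (|w| / v α) = c α := fun α hα =>
    Real.log_div (ne_of_gt hw') (ne_of_gt (hv α hα))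
  constructor
  · intro hlhs
    set L := (WithLp.linearEquiv 2 ℝ (Fin (n+1) → ℝ)).symm with hLdef
    set f : Option A → (Fin (n+1) → ℝ) := fun o =>
      Option.elim o (Fin.snoc 0 1) (fun a => Fin.snoc (fun i => a.1 i - β i) (-(c a.1))) with hf
    set g : Fin (n+1) → ℝ := Fin.snoc 0 (-1) with hg
    have hLapp : ∀ (p : Fin (n+1) → ℝ) (k : Fin (n+1)), (L p) k = p k := fun _ _ => rfl
    have hb : ∀ μ : Option A → ℝ, (∀ o, 0 ≤ μ o) →
        ∑ o, μ o • (L (f o) : EuclideanSpace ℝ (Fin (n+1))) ≠ L g := by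
      intro μ hμ heq
      have heq' : ∑ o, μ o • f o = g := by
        apply L.injective
        rw [map_sum]
        simpa [map_smul] using heq
      have happ : ∀ k, ∑ o, μ o * f o k = g k := by
        intro k
        have := congrFun heq' k
        simpa [Finset.sum_apply] using this
      have hlast : μ none - ∑ a : A, μ (some a) * c a.1 = -1 := by
        have := happ (Fin.last n)
        rw [Fintype.sum_option] at this
        simp only [hf, hg, Option.elim, Fin.snoc_last, mul_one, mul_neg] at this
        rw [Finset.sum_neg_distrib] at this
        linarith
      have hcoord : ∀ k : Fin n, ∑ a : A, μ (some a) * (a.1 k - β k) = 0 := by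
        intro k
        have := happ (Fin.castSucc k)
        rw [Fintype.sum_option] at this
        simp only [hf, hg, Option.elim, Fin.snoc_castSucc, Pi.zero_apply, mul_zero,
          zero_add] at this
        exact this
      set s := ∑ a : A, μ (some a) with hs
      have hcsum : ∑ a : A, μ (some a) * c a.1 = 1 + μ none := by linarith
      have hs0 : 0 ≤ s := Finset.sum_nonneg fun a _ => hμ _
      have hspos : 0 < s := by
        rcases hs0.lt_or_eq with h | h
        · exact h
        · exfalso
          have hall : ∀ a ∈ (univ : Finset A), μ (some a) = 0 :=
            (Finset.sum_eq_zero_iff_of_nonneg fun a _ => hμ _).1 h.symm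
          have : ∑ a : A, μ (some a) * c a.1 = 0 :=
            Finset.sum_eq_zero fun a ha => by rw [hall a ha, zero_mul]
          have hn := hμ none
          linarith
      set lam : (Fin n → ℝ) → ℝ := fun α => if h : α ∈ A then μ (some ⟨α, h⟩) / s else 0
        with hlamdef
      have hlam : ∀ a : A, lam a.1 = μ (some a) / s := fun a => by
        simp [hlamdef, a.2]
      have hconv : ∀ X : (Fin n → ℝ) → ℝ,
          ∑ α ∈ A, lam α * X α = ∑ a : A, μ (some a) / s * X a.1 := by
        intro X
        rw [← Finset.sum_coe_sort A (fun α => lam α * X α)]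
        exact Finset.sum_congr rfl fun a _ => by rw [hlam a]
      have h1 : ∀ α ∈ A, 0 ≤ lam α := by
        intro α hα
        rw [hlamdef]
        simp only [dif_pos hα]
        exact div_nonneg (hμ _) hs0
      have h2 : ∑ α ∈ A, lam α = 1 := by
        rw [← Finset.sum_coe_sort A lam]
        rw [show ∑ a : A, lam a.1 = ∑ a : A, μ (some a) / s from
          Finset.sum_congr rfl fun a _ => hlam a]
        rw [← Finset.sum_div, ← hs, div_self (ne_of_gt hspos)]
      have h3 : ∑ α ∈ A, lam α • α = β := by
        funext k
        have hk := hcoord k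
        have e2 : ∑ a : A, (μ (some a) * a.1 k - μ (some a) * β k) = 0 := by
          simpa [mul_sub] using hk
        rw [Finset.sum_sub_distrib] at e2
        have e3 : ∑ a : A, μ (some a) * β k = s * β k := by rw [← Finset.sum_mul]
        have e1 : ∑ a : A, μ (some a) * a.1 k = s * β k := by linarith
        have e4 : (∑ α ∈ A, lam α • α) k = ∑ α ∈ A, lam α * α k := by
          rw [Finset.sum_apply]
          exact Finset.sum_congr rfl fun α _ => rfl
        rw [e4, hconv (fun α => α k)]
        rw [show ∑ a : A, μ (some a) / s * a.1 k
            = (∑ a : A, μ (some a) * a.1 k) / s from by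
          rw [Finset.sum_div]
          exact Finset.sum_congr rfl fun a _ => by ring]
        rw [e1, mul_comm, mul_div_assoc, div_self (ne_of_gt hspos), mul_one]
      have hfin := hlhs lam h1 h2 h3
      have hA1 : ∑ α ∈ A, lam α * c α = (1 + μ none) / s := by
        rw [hconv c]
        rw [show ∑ a : A, μ (some a) / s * c a.1
            = (∑ a : A, μ (some a) * c a.1) / s from by
          rw [Finset.sum_div]
          exact Finset.sum_congr rfl fun a _ => by ring]
        rw [hcsum]
      have hA2 : ∑ α ∈ A, lam α * c α = Real.log |w| - ∑ α ∈ A, lam α * Real.log (v α) := by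
        simp only [hc, mul_sub]
        rw [Finset.sum_sub_distrib, ← Finset.sum_mul, h2, one_mul]
      have hpos : 0 < (1 + μ none) / s := div_pos (by linarith [hμ none]) hspos
      rw [hA2] at hA1
      linarith
    obtain ⟨y, hy1, hy2⟩ := farkas_cone (fun o => (L (f o) : EuclideanSpace ℝ (Fin (n+1))))
      (L g) hb
    have hinner : ∀ (p : Fin (n+1) → ℝ),
        ⟪(L p : EuclideanSpace ℝ (Fin (n+1))), y⟫_ℝ = ∑ k, p k * y k := by
      intro p
      rw [PiLp.inner_apply]
      exact Finset.sum_congr rfl fun k _ => by rw [RCLike.inner_apply, conj_trivial, hLapp, mul_comm]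
    have hinner2 : ⟪y, (L g : EuclideanSpace ℝ (Fin (n+1)))⟫_ℝ = ∑ k, y k * g k := by
      rw [PiLp.inner_apply]
      exact Finset.sum_congr rfl fun k _ => by rw [RCLike.inner_apply, conj_trivial, hLapp, mul_comm]
    have hylast : 0 < y (Fin.last n) := by
      rw [hinner2] at hy2
      rw [Fin.sum_univ_castSucc] at hy2
      simp only [hg, Fin.snoc_castSucc, Pi.zero_apply, mul_zero, Finset.sum_const_zero,
        zero_add, Fin.snoc_last, mul_neg, mul_one] at hy2
      linarith
    refine ⟨fun k => y (Fin.castSucc k) / y (Fin.last n), ?_⟩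
    intro α hα
    have hy := hy1 (some ⟨α, hα⟩)
    rw [hinner] at hy
    rw [Fin.sum_univ_castSucc] at hy
    simp only [hf, Option.elim, Fin.snoc_castSucc, Fin.snoc_last, neg_mul] at hy
    rw [hcdiv α hα]
    rw [show ∑ i, (α i - β i) * (y (Fin.castSucc i) / y (Fin.last n))
        = (∑ i, (α i - β i) * y (Fin.castSucc i)) / y (Fin.last n) from by
      rw [Finset.sum_div]
      exact Finset.sum_congr rfl fun i _ => by ring]
    rw [le_div_iff₀ hylast]
    linarith
  · rintro ⟨τ, hτ⟩ lam h1 h2 h3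
    have key : ∀ α ∈ A, lam α * (Real.log |w| - Real.log (v α)) ≤
        lam α * ∑ i, (α i - β i) * τ i := fun α hα =>
      mul_le_mul_of_nonneg_left (by have h := hτ α hα; rw [hcdiv α hα] at h; exact h) (h1 α hα)
    have hsum1 : ∑ α ∈ A, lam α * (Real.log |w| - Real.log (v α)) ≤
        ∑ α ∈ A, lam α * ∑ i, (α i - β i) * τ i := Finset.sum_le_sum key
    have hzero : ∑ α ∈ A, lam α * ∑ i, (α i - β i) * τ i = 0 := by
      have hz : ∀ i, ∑ α ∈ A, lam α * (α i - β i) = 0 := by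
        intro i
        have h3i : ∑ α ∈ A, lam α * α i = β i := by
          have := congrFun h3 i
          rw [Finset.sum_apply] at this
          simpa using this
        have hb : ∑ α ∈ A, lam α * β i = β i := by rw [← Finset.sum_mul, h2, one_mul]
        rw [show ∑ α ∈ A, lam α * (α i - β i)
            = ∑ α ∈ A, (lam α * α i - lam α * β i) from
          Finset.sum_congr rfl fun α _ => by ring]
        rw [Finset.sum_sub_distrib, h3i, hb, sub_self]
      calc ∑ α ∈ A, lam α * ∑ i, (α i - β i) * τ i
          = ∑ α ∈ A, ∑ i, lam α * (α i - β i) * τ i := by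
            refine Finset.sum_congr rfl fun α _ => ?_
            rw [Finset.mul_sum]
            exact Finset.sum_congr rfl fun i _ => by ring
        _ = ∑ i, ∑ α ∈ A, lam α * (α i - β i) * τ i := Finset.sum_comm
        _ = ∑ i : Fin n, (0:ℝ) := by
            refine Finset.sum_congr rfl fun i _ => ?_
            rw [← Finset.sum_mul, hz i, zero_mul]
        _ = 0 := by simp
    have hexp : ∑ α ∈ A, lam α * (Real.log |w| - Real.log (v α))
        = Real.log |w| - ∑ α ∈ A, lam α * Real.log (v α) := by
      rw [show ∑ α ∈ A, lam α * (Real.log |w| - Real.log (v α))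
          = ∑ α ∈ A, (lam α * Real.log |w| - lam α * Real.log (v α)) from
        Finset.sum_congr rfl fun α _ => by ring]
      rw [Finset.sum_sub_distrib, ← Finset.sum_mul, h2, one_mul]
    rw [hexp, hzero] at hsum1
    linarith
end

section
/- Let A ⊆ ℝⁿ nonempty finite, β ∈ conv(A), v ∈ ℝ_{>0}^A and w ∈ ℝ with w ≠ 0. Then the following are equivalent: (2) there exists τ ∈ ℝⁿ such that |w|·ln(|w|/v_α) ≤ ⟨β − α, τ⟩ for all α ∈ A; (3) there exist v* ≥ |w| and τ ∈ ℝⁿ such that v*·ln(v*/v_α) ≤ ⟨β − α, τ⟩ for all α ∈ A. -/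
open Finset

theorem stmt_9 (n : ℕ) (A : Finset (Fin n → ℝ)) (hA : A.Nonempty)
    (β : Fin n → ℝ) (hβ : β ∈ convexHull ℝ (A : Set (Fin n → ℝ)))
    (v : (Fin n → ℝ) → ℝ) (hv : ∀ α ∈ A, 0 < v α) (w : ℝ) (hw : w ≠ 0) :
    ((∃ τ : Fin n → ℝ, ∀ α ∈ A,
        |w| * Real.log (|w| / v α) ≤ ∑ i, (β i - α i) * τ i) ↔
      (∃ (vs : ℝ) (τ : Fin n → ℝ), |w| ≤ vs ∧ ∀ α ∈ A,
        vs * Real.log (vs / v α) ≤ ∑ i, (β i - α i) * τ i)) := by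
  have hw0 : 0 < |w| := abs_pos.mpr hw
  constructor
  · rintro ⟨τ, hτ⟩
    exact ⟨|w|, τ, le_refl _, hτ⟩
  · rintro ⟨vs, τ, hvs, hτ⟩
    have hvs0 : 0 < vs := lt_of_lt_of_le hw0 hvs
    refine ⟨fun i => (|w| / vs) * τ i, fun α hα => ?_⟩
    have hvα := hv α hα
    have h1 : |w| * Real.log (|w| / v α) ≤ |w| * Real.log (vs / v α) := by
      apply mul_le_mul_of_nonneg_left _ hw0.le
      apply Real.log_le_log (div_pos hw0 hvα)
      exact div_le_div_of_nonneg_right hvs hvα.le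
    have h2 : |w| * Real.log (vs / v α)
        = (|w| / vs) * (vs * Real.log (vs / v α)) := by
      field_simp
    have h3 : (|w| / vs) * (vs * Real.log (vs / v α))
        ≤ (|w| / vs) * ∑ i, (β i - α i) * τ i :=
      mul_le_mul_of_nonneg_left (hτ α hα) (div_pos hw0 hvs0).le
    calc |w| * Real.log (|w| / v α) ≤ (|w| / vs) * ∑ i, (β i - α i) * τ i := by
          rw [← h2] at h3; exact le_trans h1 h3
      _ = ∑ i, (β i - α i) * ((|w| / vs) * τ i) := by
          rw [Finset.mul_sum]; exact Finset.sum_congr rfl fun i _ => by ring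
end

section
/- Let v = (v_0, v_1, …, v_d) with v_0 = 25/18, v_1 = 5/9, and v_i = 2^{-i} for 2 ≤ i ≤ d (d ≥ 2). Then for all integers 0 ≤ i < j < k ≤ d with (k−j)·i + (j−i)·k = (k−i)·j (automatic) one has |v_j| ≤ v_i^{(k−j)/(k−i)} · v_k^{(j−i)/(k−i)}, i.e., (k−i)·ln v_j ≤ (k−j)·ln v_i + (j−i)·ln v_k. -/
theorem stmt_13 (d : ℕ) (hd : 2 ≤ d) (v : ℕ → ℝ)
    (hv0 : v 0 = 25/18) (hv1 : v 1 = 5/9)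
    (hvi : ∀ i, 2 ≤ i → i ≤ d → v i = (2 : ℝ) ^ (-(i : ℝ))) :
    ∀ i j k : ℕ, i < j → j < k → k ≤ d →
      ((k : ℝ) - i) * Real.log (v j) ≤
        ((k : ℝ) - j) * Real.log (v i) + ((j : ℝ) - i) * Real.log (v k) := by
  intro i j k hij hjk hkd
  have hjd : j ≤ d := le_trans hjk.le hkd
  have hlog : ∀ n, 2 ≤ n → n ≤ d → Real.log (v n) = -(n : ℝ) * Real.log 2 := by
    intro n h2 hnd
    rw [hvi n h2 hnd, Real.log_rpow two_pos]
  have hk2 : 2 ≤ k := by omega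
  have hlk : Real.log (v k) = -(k : ℝ) * Real.log 2 := hlog k hk2 hkd
  rw [hlk]
  match i, j with
  | (i+2), j =>
    have hj2 : 2 ≤ j := by omega
    rw [hlog (i+2) (by omega) (by omega), hlog j hj2 hjd]
    have : ((k : ℝ) - (i+2)) * ((-(j:ℝ)) * Real.log 2)
        = ((k : ℝ) - j) * ((-((i:ℕ)+2:ℕ):ℝ) * Real.log 2)
          + ((j : ℝ) - (i+2)) * ((-(k:ℝ)) * Real.log 2) := by
      push_cast; ring
    push_cast at this ⊢
    linarith
  | 1, j =>
    have hj2 : 2 ≤ j := by omega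
    rw [hlog j hj2 hjd, hv1]
    have h1 : Real.log ((5:ℝ)/9) + Real.log 2 = Real.log ((10:ℝ)/9) := by
      rw [← Real.log_mul (by norm_num) (by norm_num)]; norm_num
    have h2 : (0:ℝ) < Real.log ((10:ℝ)/9) := Real.log_pos (by norm_num)
    have hkj : (1:ℝ) ≤ (k : ℝ) - (j : ℝ) := by
      have : j + 1 ≤ k := hjk
      have := Nat.cast_le (α := ℝ) |>.2 this
      push_cast at this; linarith
    nlinarith [mul_pos (lt_of_lt_of_le one_pos hkj) h2]
  | 0, 1 =>
    rw [hv0, hv1]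
    have hb : Real.log ((5:ℝ)/9) + Real.log 2 = Real.log ((10:ℝ)/9) := by
      rw [← Real.log_mul (by norm_num) (by norm_num)]; norm_num
    have ha : Real.log ((25:ℝ)/18) = Real.log ((9:ℝ)/8) + 2 * Real.log ((10:ℝ)/9) := by
      have : ((25:ℝ)/18) = (9/8) * ((10/9) * (10/9)) := by norm_num
      rw [this, Real.log_mul (by norm_num) (by norm_num),
        Real.log_mul (by norm_num) (by norm_num)]; ring
    have h98 : (0:ℝ) < Real.log ((9:ℝ)/8) := Real.log_pos (by norm_num)
    have h109 : (0:ℝ) < Real.log ((10:ℝ)/9) := Real.log_pos (by norm_num)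
    have hkc : (2:ℝ) ≤ (k : ℝ) := by exact_mod_cast hk2
    nlinarith [mul_nonneg (by linarith : (0:ℝ) ≤ (k:ℝ) - 1) h98.le,
      mul_nonneg (by linarith : (0:ℝ) ≤ (k:ℝ) - 2) h109.le]
  | 0, (j+2) =>
    rw [hv0, hlog (j+2) (by omega) (by omega)]
    have h : (0:ℝ) < Real.log ((25:ℝ)/18) := Real.log_pos (by norm_num)
    have hkj : (1:ℝ) ≤ (k : ℝ) - ((j:ℝ)+2) := by
      have : (j+2) + 1 ≤ k := hjk
      have := Nat.cast_le (α := ℝ) |>.2 this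
      push_cast at this ⊢; linarith
    push_cast
    nlinarith [mul_pos (lt_of_lt_of_le one_pos hkj) h]
end

section
/- Let A = {α₁, α₂} ⊆ ℝⁿ with α₁ ≠ α₂ and β = λ₁α₁ + λ₂α₂ with λ₁, λ₂ > 0, λ₁ + λ₂ = 1. Let c₁, c₂ > 0 and d ∈ ℝ. Then the function f(x) = c₁|x|^{α₁} + c₂|x|^{α₂} + d|x|^β is nonnegative on (ℝ_{>0})ⁿ if and only if |d| ≤ (c₁/λ₁)^{λ₁} (c₂/λ₂)^{λ₂} or d ≥ −(c₁/λ₁)^{λ₁}(c₂/λ₂)^{λ₂} (i.e., d ≥ −Θ where Θ is the circuit number). -/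
open Finset

theorem stmt_16 (n : ℕ) (α₁ α₂ : Fin n → ℝ) (hα : α₁ ≠ α₂)
    (l₁ l₂ : ℝ) (hl₁ : 0 < l₁) (hl₂ : 0 < l₂) (hl : l₁ + l₂ = 1)
    (β : Fin n → ℝ) (hβ : β = l₁ • α₁ + l₂ • α₂)
    (c₁ c₂ : ℝ) (hc₁ : 0 < c₁) (hc₂ : 0 < c₂) (d : ℝ) :
    (∀ x : Fin n → ℝ, (∀ j, 0 < x j) →
        0 ≤ c₁ * ∏ j, (x j) ^ (α₁ j) + c₂ * ∏ j, (x j) ^ (α₂ j)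
            + d * ∏ j, (x j) ^ (β j)) ↔
      (|d| ≤ (c₁ / l₁) ^ l₁ * (c₂ / l₂) ^ l₂ ∨
        -((c₁ / l₁) ^ l₁ * (c₂ / l₂) ^ l₂) ≤ d) := by
  set Θ : ℝ := (c₁ / l₁) ^ l₁ * (c₂ / l₂) ^ l₂ with hΘ
  have hΘpos : 0 < Θ := by
    apply mul_pos <;> exact Real.rpow_pos_of_pos (by positivity) _
  -- key identity: ∏ x^β = (∏ x^α₁)^l₁ * (∏ x^α₂)^l₂
  have key : ∀ x : Fin n → ℝ, (∀ j, 0 < x j) →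
      (∏ j, (x j) ^ (β j)) =
        (∏ j, (x j) ^ (α₁ j)) ^ l₁ * (∏ j, (x j) ^ (α₂ j)) ^ l₂ := by
    intro x hx
    have h1 : ∀ j : Fin n, (x j) ^ (β j)
        = ((x j) ^ (α₁ j)) ^ l₁ * ((x j) ^ (α₂ j)) ^ l₂ := by
      intro j
      rw [hβ]
      simp only [Pi.add_apply, Pi.smul_apply, smul_eq_mul]
      rw [Real.rpow_add (hx j), mul_comm l₁, mul_comm l₂,
        Real.rpow_mul (hx j).le, Real.rpow_mul (hx j).le]
    rw [Finset.prod_congr rfl (fun j _ => h1 j), Finset.prod_mul_distrib,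
      Real.finset_prod_rpow _ _ (fun j _ => (Real.rpow_pos_of_pos (hx j) _).le),
      Real.finset_prod_rpow _ _ (fun j _ => (Real.rpow_pos_of_pos (hx j) _).le)]
  constructor
  · intro h
    right
    -- pick a coordinate where α₁ ≠ α₂
    have : ∃ j, α₁ j ≠ α₂ j := by
      by_contra hcon
      push_neg at hcon
      exact hα (funext hcon)
    obtain ⟨j₀, hj₀⟩ := this
    set a := α₁ j₀
    set b := α₂ j₀
    set r : ℝ := l₁ * c₂ / (l₂ * c₁) with hr
    have hrpos : 0 < r := by positivity
    set s : ℝ := r ^ ((a - b)⁻¹) with hs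
    have hspos : 0 < s := Real.rpow_pos_of_pos hrpos _
    have hsab : s ^ (a - b) = r := by
      rw [hs, ← Real.rpow_mul hrpos.le,
        inv_mul_cancel₀ (sub_ne_zero.mpr hj₀), Real.rpow_one]
    set x : Fin n → ℝ := fun j => if j = j₀ then s else 1 with hxdef
    have hxpos : ∀ j, 0 < x j := by
      intro j; rw [hxdef]; dsimp only; split <;> [exact hspos; norm_num]
    have hprod : ∀ α : Fin n → ℝ, (∏ j, (x j) ^ (α j)) = s ^ (α j₀) := by
      intro α
      rw [Finset.prod_eq_single j₀]
      · simp [hxdef]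
      · intro j _ hj; simp [hxdef, hj]
      · simp
    have h0 := h x hxpos
    rw [hprod α₁, hprod α₂, key x hxpos, hprod α₁, hprod α₂] at h0
    have hsa : s ^ a = r * s ^ b := by
      rw [← hsab, ← Real.rpow_add hspos]; ring_nf
    set M : ℝ := c₂ * s ^ b / l₂ with hM
    have hMpos : 0 < M := by positivity
    have e1 : c₁ * s ^ a = l₁ * M := by
      rw [hsa, hr, hM]; field_simp
    have e2 : c₂ * s ^ b = l₂ * M := by rw [hM]; field_simp
    have e3 : Θ * ((s ^ a) ^ l₁ * (s ^ b) ^ l₂) = M := by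
      have hsa' : s ^ a = l₁ * M / c₁ := by
        rw [← e1]; field_simp
      have hsb' : s ^ b = l₂ * M / c₂ := by
        rw [← e2]; field_simp
      have A : (c₁ / l₁) ^ l₁ * (l₁ * M / c₁) ^ l₁ = M ^ l₁ := by
        rw [← Real.mul_rpow (by positivity) (by positivity)]
        congr 1; field_simp
      have B : (c₂ / l₂) ^ l₂ * (l₂ * M / c₂) ^ l₂ = M ^ l₂ := by
        rw [← Real.mul_rpow (by positivity) (by positivity)]
        congr 1; field_simp
      calc Θ * ((s ^ a) ^ l₁ * (s ^ b) ^ l₂)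
          = ((c₁ / l₁) ^ l₁ * (l₁ * M / c₁) ^ l₁)
            * ((c₂ / l₂) ^ l₂ * (l₂ * M / c₂) ^ l₂) := by
            rw [hsa', hsb', hΘ]; ring
        _ = M ^ l₁ * M ^ l₂ := by rw [A, B]
        _ = M := by rw [← Real.rpow_add hMpos, hl, Real.rpow_one]
    -- from h0 : 0 ≤ c₁ s^a + c₂ s^b + d * (s^a)^l₁ (s^b)^l₂
    have hPpos : 0 < (s ^ a) ^ l₁ * (s ^ b) ^ l₂ := by
      apply mul_pos <;> exact Real.rpow_pos_of_pos (Real.rpow_pos_of_pos hspos _) _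
    nlinarith [h0, e1, e2, e3, hPpos, hMpos, hΘpos]
  · intro h x hx
    have hd : -Θ ≤ d := by
      rcases h with h | h
      · linarith [(abs_le.mp h).1]
      · exact h
    set P₁ : ℝ := ∏ j, (x j) ^ (α₁ j) with hP₁
    set P₂ : ℝ := ∏ j, (x j) ^ (α₂ j) with hP₂
    have hP₁pos : 0 < P₁ :=
      Finset.prod_pos fun j _ => Real.rpow_pos_of_pos (hx j) _
    have hP₂pos : 0 < P₂ :=
      Finset.prod_pos fun j _ => Real.rpow_pos_of_pos (hx j) _
    rw [key x hx, ← hP₁, ← hP₂]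
    have hpow : 0 < P₁ ^ l₁ * P₂ ^ l₂ := by
      apply mul_pos <;> exact Real.rpow_pos_of_pos (by assumption) _
    have amgm : Θ * (P₁ ^ l₁ * P₂ ^ l₂) ≤ c₁ * P₁ + c₂ * P₂ := by
      have := Real.geom_mean_le_arith_mean2_weighted hl₁.le hl₂.le
        (p₁ := c₁ * P₁ / l₁) (p₂ := c₂ * P₂ / l₂) (by positivity) (by positivity) hl
      calc Θ * (P₁ ^ l₁ * P₂ ^ l₂)
          = (c₁ * P₁ / l₁) ^ l₁ * (c₂ * P₂ / l₂) ^ l₂ := by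
            have A : (c₁ / l₁) ^ l₁ * P₁ ^ l₁ = (c₁ * P₁ / l₁) ^ l₁ := by
              rw [← Real.mul_rpow (by positivity) hP₁pos.le]; congr 1; ring
            have B : (c₂ / l₂) ^ l₂ * P₂ ^ l₂ = (c₂ * P₂ / l₂) ^ l₂ := by
              rw [← Real.mul_rpow (by positivity) hP₂pos.le]; congr 1; ring
            rw [hΘ, ← A, ← B]; ring
        _ ≤ l₁ * (c₁ * P₁ / l₁) + l₂ * (c₂ * P₂ / l₂) := this
        _ = c₁ * P₁ + c₂ * P₂ := by field_simp
    nlinarith [mul_le_mul_of_nonneg_right hd hpow.le]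
end

section
/- Let f₁,…,f_k : ℝⁿ → ℝ each be of the form f_i(x) = ∑_{α∈A} c^{(i)}_α |x|^α + c^{(i)}_β |x|^β with c^{(i)}_α ≥ 0 and −c^{(i)}_β ≤ ∏_α (c^{(i)}_α/λ_α)^{λ_α} for the fixed barycentric weights λ ∈ ℝ_{>0}^A of β with respect to the affinely independent set A. If the sum f = ∑ f_i satisfies c_β := ∑_i c^{(i)}_β = −∏_α (c_α/λ_α)^{λ_α} where c_α := ∑_i c^{(i)}_α > 0 for all α, then there exist ε_i ≥ 0 with c^{(i)}_α = ε_i c_α for all i and all α ∈ A. -/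
open Finset

/-- Equality case of weighted AM-GM with strictly positive weights: if the arithmetic
mean is at most the geometric mean, then all the values are equal. -/
lemma amgm_eq_case {ι : Type*} (s : Finset ι) (w z : ι → ℝ)
    (hw : ∀ i ∈ s, 0 < w i) (hw' : ∑ i ∈ s, w i = 1) (hz : ∀ i ∈ s, 0 ≤ z i)
    (hle : ∑ i ∈ s, w i * z i ≤ ∏ i ∈ s, z i ^ w i) :
    ∀ j ∈ s, ∀ k ∈ s, z j = z k := by
  by_cases hzero : ∃ i ∈ s, z i = 0
  · obtain ⟨i, his, hzi⟩ := hzero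
    have hprod : (∏ i ∈ s, z i ^ w i) = 0 := by
      apply Finset.prod_eq_zero his
      rw [hzi]
      exact Real.zero_rpow (hw i his).ne'
    rw [hprod] at hle
    have hall : ∀ j ∈ s, w j * z j = 0 := by
      intro j hj
      have h1 : ∀ j ∈ s, 0 ≤ w j * z j := fun j hj =>
        mul_nonneg (hw j hj).le (hz j hj)
      by_contra hne
      have : 0 < ∑ i ∈ s, w i * z i := by
        apply Finset.sum_pos' h1
        exact ⟨j, hj, lt_of_le_of_ne (h1 j hj) (Ne.symm hne)⟩
      linarith
    intro j hj k hk
    have hj0 : z j = 0 := by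
      have := hall j hj
      rcases mul_eq_zero.1 this with h | h
      · exact absurd h (hw j hj).ne'
      · exact h
    have hk0 : z k = 0 := by
      have := hall k hk
      rcases mul_eq_zero.1 this with h | h
      · exact absurd h (hw k hk).ne'
      · exact h
    rw [hj0, hk0]
  · push_neg at hzero
    have hzpos : ∀ i ∈ s, 0 < z i := fun i hi =>
      lt_of_le_of_ne (hz i hi) (Ne.symm (hzero i hi))
    have hsumpos : 0 < ∑ i ∈ s, w i * z i := by
      have hne : s.Nonempty := by
        by_contra h
        rw [Finset.not_nonempty_iff_eq_empty] at h
        simp [h] at hw'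
      obtain ⟨i, hi⟩ := hne
      apply Finset.sum_pos' (fun j hj => mul_nonneg (hw j hj).le (hz j hj))
      exact ⟨i, hi, mul_pos (hw i hi) (hzpos i hi)⟩
    have hlog : Real.log (∑ i ∈ s, w i • z i) ≤ ∑ i ∈ s, w i • Real.log (z i) := by
      have h1 : Real.log (∏ i ∈ s, z i ^ w i) = ∑ i ∈ s, w i * Real.log (z i) := by
        rw [Real.log_prod]
        · exact Finset.sum_congr rfl fun i hi => by
            rw [Real.log_rpow (hzpos i hi)]
        · intro i hi
          exact (Real.rpow_pos_of_pos (hzpos i hi) _).ne'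
      calc Real.log (∑ i ∈ s, w i • z i) ≤ Real.log (∏ i ∈ s, z i ^ w i) := by
            apply Real.log_le_log (by simpa [smul_eq_mul] using hsumpos)
            simpa [smul_eq_mul] using hle
        _ = ∑ i ∈ s, w i • Real.log (z i) := by simpa [smul_eq_mul] using h1
    have := strictConcaveOn_log_Ioi.eq_of_map_sum_eq hw hw'
      (fun i hi => Set.mem_Ioi.2 (hzpos i hi)) hlog
    exact this

theorem stmt_17 (n k : ℕ) (A : Finset (Fin n → ℝ))
    (hA : AffineIndependent ℝ (fun a : A => (a : Fin n → ℝ)))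
    (β : Fin n → ℝ) (lam : (Fin n → ℝ) → ℝ)
    (hlam : ∀ α ∈ A, 0 < lam α) (hlam1 : ∑ α ∈ A, lam α = 1)
    (hlamβ : ∑ α ∈ A, lam α • α = β)
    (c : Fin k → (Fin n → ℝ) → ℝ) (cβ : Fin k → ℝ)
    (hc : ∀ i, ∀ α ∈ A, 0 ≤ c i α)
    (hcirc : ∀ i, -cβ i ≤ ∏ α ∈ A, (c i α / lam α) ^ (lam α))
    (hpos : ∀ α ∈ A, 0 < ∑ i, c i α)
    (heq : ∑ i, cβ i = -∏ α ∈ A, ((∑ i, c i α) / lam α) ^ (lam α)) :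
    ∃ ε : Fin k → ℝ, (∀ i, 0 ≤ ε i) ∧
      ∀ i, ∀ α ∈ A, c i α = ε i * ∑ i', c i' α := by
  classical
  set C : (Fin n → ℝ) → ℝ := fun α => ∑ i, c i α with hC
  set G : ℝ := ∏ α ∈ A, (C α / lam α) ^ (lam α) with hG
  have hGpos : 0 < G := by
    apply Finset.prod_pos
    intro α hα
    exact Real.rpow_pos_of_pos (div_pos (hpos α hα) (hlam α hα)) _
  -- ratio function
  set S : Fin k → ℝ := fun i => ∑ α ∈ A, lam α * (c i α / C α) with hS
  have hSnonneg : ∀ i, 0 ≤ S i := fun i =>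
    Finset.sum_nonneg fun α hα =>
      mul_nonneg (hlam α hα).le (div_nonneg (hc i α hα) (hpos α hα).le)
  -- key decomposition and per-i AM-GM
  have hkey : ∀ i, (∏ α ∈ A, (c i α / lam α) ^ (lam α)) ≤ G * S i := by
    intro i
    have hdecomp : (∏ α ∈ A, (c i α / lam α) ^ (lam α))
        = G * ∏ α ∈ A, (c i α / C α) ^ (lam α) := by
      rw [hG, ← Finset.prod_mul_distrib]
      apply Finset.prod_congr rfl
      intro α hα
      rw [← Real.mul_rpow (div_nonneg (hpos α hα).le (hlam α hα).le)
        (div_nonneg (hc i α hα) (hpos α hα).le)]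
      have hCne : C α ≠ 0 := (hpos α hα).ne'
      have hlne : lam α ≠ 0 := (hlam α hα).ne'
      congr 1
      field_simp
      exact (mul_inv_cancel_right₀ hCne (c i α)).symm
    rw [hdecomp]
    apply mul_le_mul_of_nonneg_left _ hGpos.le
    calc (∏ α ∈ A, (c i α / C α) ^ (lam α))
        ≤ ∑ α ∈ A, lam α * (c i α / C α) :=
          Real.geom_mean_le_arith_mean_weighted A lam _ (fun α hα => (hlam α hα).le)
            hlam1 (fun α hα => div_nonneg (hc i α hα) (hpos α hα).le)
      _ = S i := rfl
  have hsumS : ∑ i, S i = 1 := by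
    rw [hS]
    rw [Finset.sum_comm]
    rw [← hlam1]
    apply Finset.sum_congr rfl
    intro α hα
    have hCne : C α ≠ 0 := (hpos α hα).ne'
    rw [← Finset.mul_sum, ← Finset.sum_div]
    rw [show (∑ i : Fin k, c i α) = C α from rfl, div_self hCne, mul_one]
  -- sum of products ≥ G from heq and hcirc; ≤ G from hkey; forces equality per i
  have hsum_ge : G ≤ ∑ i, ∏ α ∈ A, (c i α / lam α) ^ (lam α) := by
    have : G = -∑ i, cβ i := by rw [heq]; ring
    rw [this]
    rw [← Finset.sum_neg_distrib]
    exact Finset.sum_le_sum fun i _ => hcirc i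
  have hsum_le : (∑ i, ∏ α ∈ A, (c i α / lam α) ^ (lam α)) ≤ G := by
    calc (∑ i, ∏ α ∈ A, (c i α / lam α) ^ (lam α)) ≤ ∑ i, G * S i :=
          Finset.sum_le_sum fun i _ => hkey i
      _ = G := by rw [← Finset.mul_sum, hsumS, mul_one]
  have heach : ∀ i, (∏ α ∈ A, (c i α / lam α) ^ (lam α)) = G * S i := by
    have hzero : ∑ i, (G * S i - ∏ α ∈ A, (c i α / lam α) ^ (lam α)) = 0 := by
      rw [Finset.sum_sub_distrib, ← Finset.mul_sum, hsumS, mul_one]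
      linarith
    intro i
    have hterm : ∀ j ∈ Finset.univ (α := Fin k),
        0 ≤ G * S j - ∏ α ∈ A, (c j α / lam α) ^ (lam α) :=
      fun j _ => sub_nonneg.2 (hkey j)
    have := (Finset.sum_eq_zero_iff_of_nonneg hterm).1 hzero i (Finset.mem_univ i)
    linarith
  -- per-i AM-GM equality gives constant ratios
  have hratio : ∀ i, ∀ α ∈ A, ∀ α' ∈ A, c i α / C α = c i α' / C α' := by
    intro i
    have hdecomp : (∏ α ∈ A, (c i α / lam α) ^ (lam α))
        = G * ∏ α ∈ A, (c i α / C α) ^ (lam α) := by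
      rw [hG, ← Finset.prod_mul_distrib]
      apply Finset.prod_congr rfl
      intro α hα
      rw [← Real.mul_rpow (div_nonneg (hpos α hα).le (hlam α hα).le)
        (div_nonneg (hc i α hα) (hpos α hα).le)]
      have hCne : C α ≠ 0 := (hpos α hα).ne'
      have hlne : lam α ≠ 0 := (hlam α hα).ne'
      congr 1
      field_simp
      exact (mul_inv_cancel_right₀ hCne (c i α)).symm
    have h2 : G * ∏ α ∈ A, (c i α / C α) ^ (lam α) = G * S i := by
      rw [← hdecomp]; exact heach i
    have h3 : (∏ α ∈ A, (c i α / C α) ^ (lam α)) = S i :=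
      mul_left_cancel₀ hGpos.ne' h2
    have := amgm_eq_case A lam (fun α => c i α / C α) hlam hlam1
      (fun α hα => div_nonneg (hc i α hα) (hpos α hα).le) (le_of_eq h3.symm)
    exact fun α hα α' hα' => this α hα α' hα'
  refine ⟨S, hSnonneg, ?_⟩
  intro i α hα
  have hSi : S i = c i α / C α := by
    rw [hS]
    calc (∑ α' ∈ A, lam α' * (c i α' / C α'))
        = ∑ α' ∈ A, lam α' * (c i α / C α) := by
          apply Finset.sum_congr rfl
          intro α' hα'
          rw [hratio i α' hα' α hα]
      _ = c i α / C α := by rw [← Finset.sum_mul, hlam1, one_mul]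
  rw [hSi]
  rw [div_mul_eq_mul_div, mul_div_assoc,
    show (∑ i' : Fin k, c i' α) = C α from rfl, div_self (hpos α hα).ne', mul_one]
end

section
/- Let d be even and f(x) = ∑_{i=0}^{d−1} c_i x^i + c_d x^d with c_d > 0, c_0 > 0. Suppose v₀, v_d ≥ 0 and |v_i| ≤ v_0^{1−i/d} v_d^{i/d} for 1 ≤ i ≤ d−1, with v_0 > 0. Then ∑_{i=0}^d v_i c_i ≥ v_0 · f̂((v_d/v_0)^{1/d}), where f̂(x) = c_0 − ∑_{i=1}^{d−1} |c_i| x^i + c_d x^d. -/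
open Finset

theorem stmt_19 (d : ℕ) (hd : Even d) (hd0 : 0 < d) (c : ℕ → ℝ)
    (hc0 : 0 < c 0) (hcd : 0 < c d) (v : ℕ → ℝ)
    (hv0 : 0 < v 0) (hvd : 0 ≤ v d)
    (hvi : ∀ i, 1 ≤ i → i ≤ d - 1 →
      |v i| ≤ (v 0) ^ (1 - (i : ℝ) / d) * (v d) ^ ((i : ℝ) / d)) :
    v 0 * (c 0 - ∑ i ∈ Finset.Ioo 0 d, |c i| * ((v d / v 0) ^ ((1:ℝ)/d)) ^ i
        + c d * ((v d / v 0) ^ ((1:ℝ)/d)) ^ d)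
      ≤ ∑ i ∈ Finset.range (d + 1), v i * c i := by
  have hv0' : (0:ℝ) ≤ v 0 := hv0.le
  have hvv : (0:ℝ) ≤ v d / v 0 := div_nonneg hvd hv0'
  have hdR : (0:ℝ) < (d:ℝ) := by exact_mod_cast hd0
  set t : ℝ := (v d / v 0) ^ ((1:ℝ)/d) with ht
  have key : ∀ i : ℕ, v 0 * t ^ i = v 0 ^ (1 - (i : ℝ) / d) * v d ^ ((i : ℝ) / d) := by
    intro i
    have h1 : t ^ i = (v d / v 0) ^ ((i : ℝ)/d) := by
      rw [ht, ← Real.rpow_natCast _ i, ← Real.rpow_mul hvv]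
      ring_nf
    rw [h1, Real.div_rpow hvd hv0', Real.rpow_sub hv0, Real.rpow_one]
    field_simp
  have htd : v 0 * t ^ d = v d := by
    rw [ht, ← Real.rpow_natCast _ d, ← Real.rpow_mul hvv, one_div,
      inv_mul_cancel₀ hdR.ne', Real.rpow_one]
    field_simp
  have hsplit : ∑ i ∈ Finset.range (d + 1), v i * c i
      = v 0 * c 0 + ∑ i ∈ Finset.Ioo 0 d, v i * c i + v d * c d := by
    rw [Finset.sum_range_succ]
    congr 1
    have : Finset.range d = insert 0 (Finset.Ioo 0 d) := by
      ext x
      simp [Finset.mem_range, Finset.mem_insert, Nat.pos_iff_ne_zero]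
      omega
    rw [this, Finset.sum_insert (by simp)]
  rw [hsplit, mul_add, mul_sub, Finset.mul_sum, ← mul_assoc, mul_comm (v 0) (c d), mul_assoc,
    htd]
  have hterm : ∀ i ∈ Finset.Ioo 0 d, -(v 0 * (|c i| * t ^ i)) ≤ v i * c i := by
    intro i hi
    simp only [Finset.mem_Ioo] at hi
    have hb := hvi i hi.1 (by omega)
    rw [← key] at hb
    have ht0 : (0:ℝ) ≤ t := Real.rpow_nonneg hvv _
    calc -(v 0 * (|c i| * t ^ i)) = -(|c i| * (v 0 * t ^ i)) := by ring
      _ ≤ -(|c i| * |v i|) := by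
          apply neg_le_neg
          exact mul_le_mul_of_nonneg_left hb (abs_nonneg _)
      _ = -|v i * c i| := by rw [abs_mul]; ring
      _ ≤ v i * c i := neg_abs_le _
  have := Finset.sum_le_sum hterm
  rw [Finset.sum_neg_distrib] at this
  linarith
end
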